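/- For the map X̄ defined from a smooth function u : Sⁿ → ℝ by X̄(e) = (1/2)e^u(−e,1) + (1/2)(e^u|∇̄u|² + e^{-u})(e,1) − e^u ∇̄^q u (e_q,0), the symmetric tensor A_{jk} := −⟨∂_j X̄, E_k⟩, with E_k = (e_k, 0) − u_k(e,1), equals A_{jk} = ∇̄_j∇̄_k φ − (|∇̄φ|²/(2φ))ḡ_{jk} + ((φ − φ⁻¹)/2)ḡ_{jk}, where φ = e^u. -/

import Mathlib

open scoped RealInnerProductSpace

/-- The Minkowski inner product on `V × ℝ` (last coordinate timelike). -/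
noncomputable def minkP {V : Type*} [NormedAddCommGroup V] [InnerProductSpace ℝ V]
    (p q : V × ℝ) : ℝ := ⟪p.1, q.1⟫ - p.2 * q.2

/-- The map `X̄` determined by the horospherical support function `u = log φ`,
written using the (0-homogeneous) extension `φ` of `e^u` off the unit sphere:
`X̄ = (1/2)e^u(−e,1) + (1/2)(e^u|∇̄u|² + e^{−u})(e,1) − e^u ∇̄u`. -/
noncomputable def barXmap {n : ℕ} (φ : EuclideanSpace ℝ (Fin (n + 1)) → ℝ)
    (x : EuclideanSpace ℝ (Fin (n + 1))) : EuclideanSpace ℝ (Fin (n + 1)) × ℝ :=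
  (-(φ x) • gradient (fun y => Real.log (φ y)) x +
      ((1 / 2) * φ x * ‖gradient (fun y => Real.log (φ y)) x‖ ^ 2
        - Real.sinh (Real.log (φ x))) • x,
    (1 / 2) * φ x * ‖gradient (fun y => Real.log (φ y)) x‖ ^ 2
      + Real.cosh (Real.log (φ x)))

/-- For a smooth positive `φ = e^u`, extended 0-homogeneously off the unit
sphere, the tensor `A_{jk} = −⟨∂_j X̄, E_k⟩` with `E_k = (e_k,0) − u_k(e,1)`
equals `∇̄_j∇̄_k φ − (|∇̄φ|²/(2φ)) ḡ_{jk} + ((φ − φ⁻¹)/2) ḡ_{jk}`: evaluated at a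
unit vector `e` on tangent vectors `v, w`, the covariant Hessian of `φ` on the
sphere is the ambient second derivative of the 0-homogeneous extension. -/
theorem stmt14 {n : ℕ} (φ : EuclideanSpace ℝ (Fin (n + 1)) → ℝ)
    (hφ : ContDiffOn ℝ (⊤ : ℕ∞) φ {x | x ≠ 0})
    (hpos : ∀ x, x ≠ 0 → 0 < φ x)
    (hhom : ∀ c : ℝ, 0 < c → ∀ x, φ (c • x) = φ x)
    (e v w : EuclideanSpace ℝ (Fin (n + 1)))
    (he : ‖e‖ = 1) (hv : ⟪v, e⟫ = 0) (hw : ⟪w, e⟫ = 0) :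
    -(minkP (fderiv ℝ (barXmap φ) e v)
        ((w, (0 : ℝ)) - fderiv ℝ (fun x => Real.log (φ x)) e w • (e, (1 : ℝ)))) =
      fderiv ℝ (fun x => fderiv ℝ φ x w) e v
        - (‖gradient φ e‖ ^ 2 / (2 * φ e)) * ⟪v, w⟫
        + ((φ e - (φ e)⁻¹) / 2) * ⟪v, w⟫ := by
  have he0 : e ≠ 0 := by
    intro h; rw [h] at he; simp at he
  have hU : IsOpen {x : EuclideanSpace ℝ (Fin (n + 1)) | x ≠ 0} := isOpen_ne
  have hnhds : {x : EuclideanSpace ℝ (Fin (n + 1)) | x ≠ 0} ∈ nhds e := hU.mem_nhds he0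
  have hφat : ∀ x : EuclideanSpace ℝ (Fin (n + 1)), x ≠ 0 → ContDiffAt ℝ (⊤ : ℕ∞) φ x :=
    fun x hx => hφ.contDiffAt (hU.mem_nhds hx)
  have hdφ : ∀ x : EuclideanSpace ℝ (Fin (n + 1)), x ≠ 0 → DifferentiableAt ℝ φ x :=
    fun x hx => (hφat x hx).differentiableAt (by simp)
  set g : EuclideanSpace ℝ (Fin (n + 1)) → EuclideanSpace ℝ (Fin (n + 1)) := gradient φ
    with hgdef
  have hinner : ∀ (f : EuclideanSpace ℝ (Fin (n + 1)) → ℝ) x y,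
      ⟪gradient f x, y⟫ = fderiv ℝ f x y := fun f x y =>
    InnerProductSpace.toDual_symm_apply
  -- Euler identity from 0-homogeneity
  have euler : ∀ x : EuclideanSpace ℝ (Fin (n + 1)), x ≠ 0 → fderiv ℝ φ x x = 0 := by
    intro x hx
    have hsm : HasDerivAt (fun c : ℝ => c • x) x 1 := by
      simpa using (hasDerivAt_id (1 : ℝ)).smul_const x
    have hcomp : HasDerivAt (fun c : ℝ => φ (c • x)) (fderiv ℝ φ x x) 1 := by
      have h := (hdφ x hx).hasFDerivAt
      rw [show x = (1 : ℝ) • x by simp] at h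
      exact (by simpa using h.comp_hasDerivAt 1 hsm :
        HasDerivAt (φ ∘ fun c : ℝ => c • x) (fderiv ℝ φ x x) 1)
    have hconst : (fun c : ℝ => φ (c • x)) =ᶠ[nhds (1 : ℝ)] fun _ => φ x := by
      filter_upwards [eventually_gt_nhds zero_lt_one] with c hc
      exact hhom c hc x
    have h0 : HasDerivAt (fun c : ℝ => φ (c • x)) 0 1 :=
      (hasDerivAt_const (1 : ℝ) (φ x)).congr_of_eventuallyEq hconst
    exact hcomp.unique h0
  have gEuler : ∀ x : EuclideanSpace ℝ (Fin (n + 1)), x ≠ 0 → ⟪g x, x⟫ = 0 := by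
    intro x hx
    rw [hgdef, hinner φ x x, euler x hx]
  -- smoothness of the gradient
  have hgc : ContDiffAt ℝ (⊤ : ℕ∞) g e := by
    have h1 : ContDiffAt ℝ (⊤ : ℕ∞) (fderiv ℝ φ) e := (hφat e he0).fderiv_right (by simp)
    exact ((InnerProductSpace.toDual ℝ
      (EuclideanSpace ℝ (Fin (n + 1)))).symm.contDiff.contDiffAt.comp e h1 : _)
  have hgd : DifferentiableAt ℝ g e := hgc.differentiableAt (by simp)
  set Dg := fderiv ℝ g e with hDgdef
  have hDg : HasFDerivAt g Dg e := hgd.hasFDerivAt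
  -- derivative of the Euler identity
  have hDge : ∀ y : EuclideanSpace ℝ (Fin (n + 1)), ⟪Dg y, e⟫ = -⟪g e, y⟫ := by
    intro y
    have hq : HasFDerivAt (fun x => ⟪g x, x⟫)
        ((fderivInnerCLM ℝ (g e, e)).comp
          (Dg.prod (ContinuousLinearMap.id ℝ _))) e :=
      hDg.inner ℝ (hasFDerivAt_id e)
    have hq0 : (fun x => ⟪g x, x⟫) =ᶠ[nhds e] fun _ => (0 : ℝ) := by
      filter_upwards [hnhds] with x hx
      exact gEuler x hx
    have hq2 : HasFDerivAt (fun x => ⟪g x, x⟫) 0 e :=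
      (hasFDerivAt_const (𝕜 := ℝ) (0 : ℝ) e).congr_of_eventuallyEq hq0
    have h := congrArg (fun L : EuclideanSpace ℝ (Fin (n + 1)) →L[ℝ] ℝ => L y)
      (hq.unique hq2)
    simp only [ContinuousLinearMap.comp_apply, ContinuousLinearMap.prod_apply,
      ContinuousLinearMap.coe_id', id_eq, fderivInnerCLM_apply,
      ContinuousLinearMap.zero_apply] at h
    linarith
  -- the Hessian term
  have hHess : fderiv ℝ (fun x => fderiv ℝ φ x w) e v = ⟪Dg v, w⟫ := by
    have hfun : (fun x => fderiv ℝ φ x w) = fun x => ⟪g x, w⟫ := by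
      funext x; exact (hinner φ x w).symm
    rw [hfun]
    have hw' : HasFDerivAt (fun x => ⟪g x, w⟫)
        ((fderivInnerCLM ℝ (g e, w)).comp (Dg.prod 0)) e :=
      hDg.inner ℝ (hasFDerivAt_const w e)
    rw [hw'.fderiv]
    simp [fderivInnerCLM_apply]
  -- gradient of log φ
  have hlog : ∀ x : EuclideanSpace ℝ (Fin (n + 1)), x ≠ 0 →
      HasFDerivAt (fun y => Real.log (φ y)) ((φ x)⁻¹ • fderiv ℝ φ x) x := fun x hx =>
    (Real.hasDerivAt_log (hpos x hx).ne').comp_hasFDerivAt x (hdφ x hx).hasFDerivAt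
  have hglog : ∀ x : EuclideanSpace ℝ (Fin (n + 1)), x ≠ 0 →
      gradient (fun y => Real.log (φ y)) x = (φ x)⁻¹ • g x := by
    intro x hx
    rw [hgdef]
    unfold gradient
    rw [(hlog x hx).fderiv, map_smul]
  -- the simplified map
  set ρ : EuclideanSpace ℝ (Fin (n + 1)) → ℝ :=
    fun x => ‖g x‖ ^ 2 / (2 * φ x) - (φ x - (φ x)⁻¹) / 2 with hρdef
  set Fm : EuclideanSpace ℝ (Fin (n + 1)) → EuclideanSpace ℝ (Fin (n + 1)) × ℝ :=
    fun x => (ρ x • x - g x, ρ x + φ x) with hFdef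
  have hFeq : barXmap φ =ᶠ[nhds e] Fm := by
    filter_upwards [hnhds] with x hx
    have hb : 0 < φ x := hpos x hx
    have hb' : φ x ≠ 0 := hb.ne'
    have hsc : (1 / 2) * φ x * ‖(φ x)⁻¹ • g x‖ ^ 2 = ‖g x‖ ^ 2 / (2 * φ x) := by
      rw [norm_smul, norm_inv, Real.norm_eq_abs, abs_of_pos hb, mul_pow]
      field_simp
    show barXmap φ x = (ρ x • x - g x, ρ x + φ x)
    unfold barXmap
    rw [hglog x hx, hsc, Real.sinh_log hb, Real.cosh_log hb]
    refine Prod.ext ?_ ?_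
    · show -(φ x) • ((φ x)⁻¹ • g x) +
        (‖g x‖ ^ 2 / (2 * φ x) - (φ x - (φ x)⁻¹) / 2) • x = ρ x • x - g x
      rw [smul_smul, show -(φ x) * (φ x)⁻¹ = -1 by field_simp, neg_one_smul]
      rw [hρdef]
      abel
    · show ‖g x‖ ^ 2 / (2 * φ x) + (φ x + (φ x)⁻¹) / 2 = ρ x + φ x
      rw [hρdef]
      ring
  -- differentiability of ρ
  have hρd : DifferentiableAt ℝ ρ e := by
    have h3 : ContDiffAt ℝ (⊤ : ℕ∞) (fun x => ‖g x‖ ^ 2 / (2 * φ x)) e := by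
      refine ContDiffAt.div (hgc.norm_sq ℝ) (contDiffAt_const.mul (hφat e he0)) ?_
      exact (mul_pos two_pos (hpos e he0)).ne'
    have h4 : ContDiffAt ℝ (⊤ : ℕ∞) (fun x => (φ x - (φ x)⁻¹) / 2) e :=
      ((hφat e he0).sub ((hφat e he0).inv (hpos e he0).ne')).div_const (2:ℝ)
    exact (h3.sub h4).differentiableAt (by simp)
  set Dρ := fderiv ℝ ρ e with hDρdef
  have hρF : HasFDerivAt ρ Dρ e := hρd.hasFDerivAt
  set Dφe := fderiv ℝ φ e with hDφedef
  have hφF : HasFDerivAt φ Dφe e := (hdφ e he0).hasFDerivAt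
  have hF1 : HasFDerivAt (fun x => ρ x • x - g x)
      (ρ e • ContinuousLinearMap.id ℝ (EuclideanSpace ℝ (Fin (n + 1)))
        + Dρ.smulRight e - Dg) e :=
    (hρF.smul (hasFDerivAt_id e)).sub hDg
  have hF2 : HasFDerivAt (fun x => ρ x + φ x) (Dρ + Dφe) e := hρF.add hφF
  have hFD : HasFDerivAt Fm
      ((ρ e • ContinuousLinearMap.id ℝ (EuclideanSpace ℝ (Fin (n + 1)))
        + Dρ.smulRight e - Dg).prod (Dρ + Dφe)) e := hF1.prodMk hF2
  have hfb : fderiv ℝ (barXmap φ) e = fderiv ℝ Fm e := hFeq.fderiv_eq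
  rw [hfb, hFD.fderiv, hHess]
  set t := fderiv ℝ (fun x => Real.log (φ x)) e w with htdef
  have happ : ((ρ e • ContinuousLinearMap.id ℝ (EuclideanSpace ℝ (Fin (n + 1)))
        + Dρ.smulRight e - Dg).prod (Dρ + Dφe)) v
      = (ρ e • v + Dρ v • e - Dg v, Dρ v + Dφe v) := by
    simp
  rw [happ]
  have hsub : ((w, (0 : ℝ)) - t • (e, (1 : ℝ))) = (w - t • e, -t) := by
    simp [Prod.ext_iff]
  rw [hsub]
  have hev : ⟪e, v⟫ = 0 := by rw [real_inner_comm]; exact hv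
  have hew : ⟪e, w⟫ = 0 := by rw [real_inner_comm]; exact hw
  have hee : ⟪e, e⟫ = (1 : ℝ) := by
    rw [real_inner_self_eq_norm_sq, he, one_pow]
  have hgev : ⟪g e, v⟫ = Dφe v := by rw [hgdef, hDφedef]; exact hinner φ e v
  have hDgev : ⟪Dg v, e⟫ = -Dφe v := by rw [hDge v, hgev]
  simp only [minkP, inner_sub_left, inner_add_left, inner_sub_right,
    real_inner_smul_left, real_inner_smul_right, hv, hw, hev, hew, hee,
    hDgev]
  have hρe : ρ e = ‖g e‖ ^ 2 / (2 * φ e) - (φ e - (φ e)⁻¹) / 2 := by rw [hρdef]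
  rw [hρe]
  ring
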